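/- arXiv:0706.4353 — 5 statements merged into one kernel-verified Lean document; each statement's English description precedes it below -/
import Mathlib

section
/- Let A be a commutative K-algebra graded by ℤ^n which is generated as a K-algebra by homogeneous elements f_1, …, f_r with f_i ∈ A_{d_i}. Then for every K-algebra homomorphism x : A → K, the orbit cone ω(x) equals the convex cone in ℚ^n generated over ℚ_{≥0} by the degrees d_i of those generators with x(f_i) ≠ 0. -/
/-- The convex cone in `ℚ^n` generated over `ℚ_{≥0}` by a set `S`:
all finite nonnegative rational combinations of elements of `S`. -/
def coneGen {n : ℕ} (S : Set (Fin n → ℚ)) : Set (Fin n → ℚ) :=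
  {v | ∃ (s : Finset (Fin n → ℚ)) (c : (Fin n → ℚ) → ℚ),
    (∀ w ∈ s, 0 ≤ c w ∧ w ∈ S) ∧ v = ∑ w ∈ s, c w • w}

/-- The orbit cone `ω(x)` of a `K`-algebra homomorphism `x : A → K`: the convex
cone generated over `ℚ_{≥0}` by all `m ∈ ℤ^n` admitting `a ∈ 𝒜 m` with `x a ≠ 0`. -/
def orbitCone {K A : Type*} [Field K] [CommRing A] [Algebra K A]
    {n : ℕ} (𝒜 : (Fin n → ℤ) → Submodule K A) (x : A →ₐ[K] K) : Set (Fin n → ℚ) :=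
  coneGen {v | ∃ (m : Fin n → ℤ) (a : A), a ∈ 𝒜 m ∧ x a ≠ 0 ∧ v = fun j => (m j : ℚ)}

/-!
If `x` does not vanish on the degree-`m` component of a product, then `m = i + j` where `x` does
not vanish on the degree-`i` and degree-`j` components of the factors. Since `A` is spanned by
monomials in the homogeneous generators `f i`, every degree `m` with `x` nonvanishing on `A_m` is
therefore a sum of degrees `d i` with `x (f i) ≠ 0`. The two sets of degrees thus generate the
same additive monoid, hence span the same cone.
-/

open DirectSum

theorem coneGen_eq_hull {n : ℕ} (S : Set (Fin n → ℚ)) :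
    coneGen S = PointedCone.hull ℚ S := by
  ext v
  rw [SetLike.mem_coe, Submodule.mem_span_iff_exists_finset_subset]
  constructor
  · rintro ⟨s, c, hc, rfl⟩
    refine ⟨fun w => if h : w ∈ s then ⟨c w, (hc w h).1⟩ else 0, s, fun w hw => (hc w hw).2,
      fun w hw => by_contra fun h => hw (dif_neg h), Finset.sum_congr rfl fun w hw => ?_⟩
    simp only [hw, dite_true]
    rfl
  · rintro ⟨c, s, hs, -, rfl⟩
    exact ⟨s, fun w => c w, fun w hw => ⟨(c w).2, hs hw⟩, rfl⟩

theorem PointedCone.hull_image_closure {R M E : Type*} [Semiring R] [PartialOrder R]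
    [IsOrderedRing R] [AddMonoid M] [AddCommMonoid E] [Module R E] (g : M →+ E) (s : Set M) :
    hull R (g '' AddSubmonoid.closure s) = hull R (g '' s) := by
  rw [← AddSubmonoid.coe_map, AddMonoidHom.map_mclosure]
  exact Submodule.span_closure

section Graded

variable {ι K A B : Type*} [DecidableEq ι] [AddMonoid ι] [CommSemiring K] [Semiring A]
  [Semiring B] [Algebra K A] [Algebra K B] {𝒜 : ι → Submodule K A} [GradedAlgebra 𝒜]
  {x : A →ₐ[K] B}

variable (𝒜 x) in
def nonvanishingDegrees : Set ι := {m | ∃ a ∈ 𝒜 m, x a ≠ 0}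

theorem eq_of_mem_of_map_decompose_ne_zero {a : A} {i m : ι} (ha : a ∈ 𝒜 i)
    (h : x (decompose 𝒜 a m) ≠ 0) : i = m :=
  by_contra fun hne => h (by rw [decompose_of_mem_ne 𝒜 ha hne, map_zero])

theorem map_decompose_ne_zero_of_add {a b : A} {m : ι} (h : x (decompose 𝒜 (a + b) m) ≠ 0) :
    x (decompose 𝒜 a m) ≠ 0 ∨ x (decompose 𝒜 b m) ≠ 0 := by
  rw [decompose_add, DirectSum.add_apply, Submodule.coe_add, map_add] at h
  by_contra! hab
  exact h (by rw [hab.1, hab.2, add_zero])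

theorem exists_map_decompose_ne_zero_of_mul {a b : A} {m : ι}
    (h : x (decompose 𝒜 (a * b) m) ≠ 0) :
    ∃ i j, i + j = m ∧ x (decompose 𝒜 a i) ≠ 0 ∧ x (decompose 𝒜 b j) ≠ 0 := by
  classical
  rw [decompose_mul, coe_mul_apply, map_sum] at h
  obtain ⟨⟨i, j⟩, hij, hne⟩ := Finset.exists_ne_zero_of_sum_ne_zero h
  rw [map_mul] at hne
  exact ⟨i, j, (Finset.mem_filter.1 hij).2, left_ne_zero_of_mul hne, right_ne_zero_of_mul hne⟩

theorem nonvanishingDegrees_subset_closure {σ : Type*} {f : σ → A} {d : σ → ι}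
    (hf : ∀ i, f i ∈ 𝒜 (d i)) (hgen : Algebra.adjoin K (Set.range f) = ⊤) :
    nonvanishingDegrees 𝒜 x ⊆ AddSubmonoid.closure (d '' {i | x (f i) ≠ 0}) := by
  rintro m ⟨a, ham, hxa⟩
  rw [← decompose_of_mem_same 𝒜 ham] at hxa
  clear ham
  have ha : a ∈ Algebra.adjoin K (Set.range f) := hgen ▸ Algebra.mem_top
  induction ha using Algebra.adjoin_induction generalizing m with
  | mem _ hb =>
    obtain ⟨i, rfl⟩ := hb
    obtain rfl := eq_of_mem_of_map_decompose_ne_zero (hf i) hxa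
    rw [decompose_of_mem_same 𝒜 (hf i)] at hxa
    exact AddSubmonoid.subset_closure ⟨i, hxa, rfl⟩
  | algebraMap k =>
    obtain rfl := eq_of_mem_of_map_decompose_ne_zero (SetLike.algebraMap_mem_graded 𝒜 k) hxa
    exact zero_mem _
  | add b c _ _ hb hc =>
    exact (map_decompose_ne_zero_of_add hxa).elim (hb ·) (hc ·)
  | mul b c _ _ hb hc =>
    obtain ⟨i, j, rfl, hi, hj⟩ := exists_map_decompose_ne_zero_of_mul hxa
    exact add_mem (hb hi) (hc hj)

theorem closure_nonvanishingDegrees_eq {σ : Type*} {f : σ → A} {d : σ → ι}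
    (hf : ∀ i, f i ∈ 𝒜 (d i)) (hgen : Algebra.adjoin K (Set.range f) = ⊤) :
    AddSubmonoid.closure (nonvanishingDegrees 𝒜 x) =
      AddSubmonoid.closure (d '' {i | x (f i) ≠ 0}) := by
  refine le_antisymm (AddSubmonoid.closure_le.2 (nonvanishingDegrees_subset_closure hf hgen))
    (AddSubmonoid.closure_mono ?_)
  rintro _ ⟨i, hi, rfl⟩
  exact ⟨f i, hf i, hi⟩

end Graded

theorem orbitCone_eq_coneGen_of_degrees_of_generators_general
    {K A : Type*} [Field K] [CommRing A] [Algebra K A]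
    {n : ℕ} (𝒜 : (Fin n → ℤ) → Submodule K A) [GradedAlgebra 𝒜]
    {r : ℕ} (f : Fin r → A) (d : Fin r → Fin n → ℤ)
    (hf : ∀ i, f i ∈ 𝒜 (d i))
    (hgen : Algebra.adjoin K (Set.range f) = ⊤)
    (x : A →ₐ[K] K) :
    orbitCone 𝒜 x =
      coneGen {v | ∃ i : Fin r, x (f i) ≠ 0 ∧ v = fun j => (d i j : ℚ)} := by
  set castQ : (Fin n → ℤ) →+ (Fin n → ℚ) := (Int.castAddHom ℚ).compLeft (Fin n)
  have hω : orbitCone 𝒜 x = coneGen (castQ '' nonvanishingDegrees 𝒜 x) := by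
    refine congrArg coneGen (Set.ext fun v => ⟨?_, ?_⟩)
    · rintro ⟨m, a, ha, hxa, rfl⟩
      exact ⟨m, ⟨a, ha, hxa⟩, rfl⟩
    · rintro ⟨m, ⟨a, ha, hxa⟩, rfl⟩
      exact ⟨m, a, ha, hxa, rfl⟩
  have hD : {v | ∃ i : Fin r, x (f i) ≠ 0 ∧ v = fun j => (d i j : ℚ)} =
      castQ '' (d '' {i | x (f i) ≠ 0}) := by
    rw [Set.image_image]
    exact Set.ext fun v => ⟨fun ⟨i, hi, hv⟩ => ⟨i, hi, hv.symm⟩, fun ⟨i, hi, hv⟩ => ⟨i, hi, hv.symm⟩⟩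
  rw [hω, hD, coneGen_eq_hull, coneGen_eq_hull, ← PointedCone.hull_image_closure,
    closure_nonvanishingDegrees_eq hf hgen, PointedCone.hull_image_closure]

/-- Let `A` be a commutative `K`-algebra graded by `ℤ^n` which is generated as a
`K`-algebra by homogeneous elements `f 1, …, f r` with `f i ∈ 𝒜 (d i)`. Then for
every `K`-algebra homomorphism `x : A → K`, the orbit cone `ω(x)` equals the convex
cone in `ℚ^n` generated over `ℚ_{≥0}` by the degrees `d i` of those generators with
`x (f i) ≠ 0`. -/
theorem orbitCone_eq_coneGen_of_degrees_of_generators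
    {K A : Type*} [Field K] [CommRing A] [Algebra K A]
    {n : ℕ} (hn : 1 ≤ n) (𝒜 : (Fin n → ℤ) → Submodule K A) [GradedAlgebra 𝒜]
    {r : ℕ} (f : Fin r → A) (d : Fin r → Fin n → ℤ)
    (hf : ∀ i, f i ∈ 𝒜 (d i))
    (hgen : Algebra.adjoin K (Set.range f) = ⊤)
    (x : A →ₐ[K] K) :
    orbitCone 𝒜 x =
      coneGen {v | ∃ i : Fin r, x (f i) ≠ 0 ∧ v = fun j => (d i j : ℚ)} :=
  orbitCone_eq_coneGen_of_degrees_of_generators_general 𝒜 f d hf hgen x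
end

section
/- Let A be a commutative K-algebra graded by ℤ^n which is finitely generated as a K-algebra. Then every orbit cone ω(x) is a finitely generated (polyhedral) convex cone in ℚ^n, and the set of all orbit cones {ω(x) : x a K-algebra homomorphism A → K} is finite. -/
/-!
Pick finitely many homogeneous generators of `A`, with degrees in a finite set `D`. If `a` is
homogeneous of degree `m` and `x a ≠ 0`, then writing `a` as a combination of monomials in the
generators, some monomial of degree `m` survives `x`, so `m` is a sum of degrees of generators
not killed by `x`. Hence `ω(x)` is generated by the degrees in `D` that are weights of `x`: it is
polyhedral, and it is determined by a subset of the finite set `D`.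
-/

section Weights

variable {ι R A B : Type*} [DecidableEq ι] [AddMonoid ι] [CommSemiring R] [Semiring A]
  [Algebra R A] [Semiring B] [Algebra R B] (𝒜 : ι → Submodule R A) [GradedAlgebra 𝒜]

def weights (x : A →ₐ[R] B) : Set ι := {i | ∃ a ∈ 𝒜 i, x a ≠ 0}

variable {𝒜}

lemma exists_finset_adjoin_eq_top_and_homogeneous [Algebra.FiniteType R A] :
    ∃ T : Finset A, Algebra.adjoin R (T : Set A) = ⊤ ∧ ∀ t ∈ T, SetLike.IsHomogeneousElem 𝒜 t := by
  classical
  obtain ⟨G, hG⟩ := Algebra.FiniteType.out (R := R) (A := A)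
  refine ⟨G.biUnion fun g => (DirectSum.decompose 𝒜 g).support.image
    fun i => (DirectSum.decompose 𝒜 g i : A), ?_, ?_⟩
  · rw [← top_le_iff, ← hG, Algebra.adjoin_le_iff]
    intro g hg
    rw [← DirectSum.sum_support_decompose 𝒜 g]
    exact sum_mem fun i hi =>
      Algebra.subset_adjoin (Finset.mem_biUnion.2 ⟨g, hg, Finset.mem_image_of_mem _ hi⟩)
  · simp only [Finset.mem_biUnion, Finset.mem_image]
    rintro _ ⟨g, -, i, -, rfl⟩
    exact ⟨i, SetLike.coe_mem _⟩

lemma exists_mem_graded_of_mem_closure {x : A →ₐ[R] B} {M : AddSubmonoid ι} {T : Set A}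
    (hT : ∀ t ∈ T, ∃ i, t ∈ 𝒜 i ∧ (x t ≠ 0 → i ∈ M)) {p : A} (hp : p ∈ Submonoid.closure T) :
    ∃ i, p ∈ 𝒜 i ∧ (x p ≠ 0 → i ∈ M) := by
  induction hp using Submonoid.closure_induction with
  | mem t ht => exact hT t ht
  | one => exact ⟨0, SetLike.one_mem_graded 𝒜, fun _ => M.zero_mem⟩
  | mul p q _ _ hp hq =>
    obtain ⟨i, hpi, hxp⟩ := hp
    obtain ⟨j, hqj, hxq⟩ := hq
    refine ⟨i + j, SetLike.mul_mem_graded hpi hqj, fun hxpq => ?_⟩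
    rw [map_mul] at hxpq
    exact M.add_mem (hxp (left_ne_zero_of_mul hxpq)) (hxq (right_ne_zero_of_mul hxpq))

lemma weights_subset_of_adjoin_eq_top {x : A →ₐ[R] B} {M : AddSubmonoid ι} {T : Set A}
    (hT : Algebra.adjoin R T = ⊤) (hTM : ∀ t ∈ T, ∃ i, t ∈ 𝒜 i ∧ (x t ≠ 0 → i ∈ M)) :
    weights 𝒜 x ⊆ M := by
  let V : Submodule R A := ⨅ (i : ι) (_ : i ∉ M),
    LinearMap.ker (x.toLinearMap ∘ₗ GradedAlgebra.proj 𝒜 i)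
  have mem_V {a : A} : a ∈ V ↔ ∀ i ∉ M, x (DirectSum.decompose 𝒜 a i) = 0 := by
    simp [V, Submodule.mem_iInf, GradedAlgebra.proj_apply]
  have hV : ∀ a, a ∈ V := by
    suffices h : Submodule.span R (Submonoid.closure T : Set A) ≤ V by
      rw [← Algebra.adjoin_eq_span, hT] at h
      exact fun a => h trivial
    refine Submodule.span_le.2 fun p hp => mem_V.2 fun i hi => ?_
    obtain ⟨j, hpj, hxp⟩ := exists_mem_graded_of_mem_closure hTM hp
    by_cases hij : j = i
    · subst hij
      rw [DirectSum.decompose_of_mem_same 𝒜 hpj]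
      exact not_not.1 (mt hxp hi)
    · rw [DirectSum.decompose_of_mem_ne 𝒜 hpj hij, map_zero]
  rintro i ⟨a, hai, hxa⟩
  by_contra hi
  exact hxa (by simpa [DirectSum.decompose_of_mem_same 𝒜 hai] using mem_V.1 (hV a) i hi)

lemma exists_finset_weights_subset_closure [Algebra.FiniteType R A] :
    ∃ D : Finset ι, ∀ x : A →ₐ[R] B,
      weights 𝒜 x ⊆ AddSubmonoid.closure (↑D ∩ weights 𝒜 x) := by
  classical
  obtain ⟨T, hT, hhom⟩ := exists_finset_adjoin_eq_top_and_homogeneous (𝒜 := 𝒜)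
  choose! deg hdeg using hhom
  refine ⟨T.image deg, fun x => weights_subset_of_adjoin_eq_top hT fun t ht => ?_⟩
  refine ⟨deg t, hdeg t ht, fun hxt => AddSubmonoid.subset_closure ?_⟩
  exact ⟨Finset.mem_image_of_mem deg ht, t, hdeg t ht, hxt⟩

end Weights

section Cones

variable {n : ℕ}

lemma coneGen_eq_span (S : Set (Fin n → ℚ)) :
    coneGen S = (Submodule.span ℚ≥0 S : Set (Fin n → ℚ)) := by
  ext v
  constructor
  · rintro ⟨s, c, hc, rfl⟩
    refine sum_mem fun w hw => ?_
    rw [← Rat.coe_toNNRat _ (hc w hw).1, NNRat.cast_smul_eq_nnqsmul]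
    exact Submodule.smul_mem _ _ (Submodule.subset_span (hc w hw).2)
  · rw [SetLike.mem_coe, Submodule.mem_span_iff_exists_finset_subset]
    rintro ⟨f, s, hs, -, rfl⟩
    exact ⟨s, fun w => f w, fun w hw => ⟨(f w).coe_nonneg, hs hw⟩,
      Finset.sum_congr rfl fun w _ => (NNRat.cast_smul_eq_nnqsmul ℚ (f w) w).symm⟩

lemma coneGen_image_eq_of_subset_closure {M : Type*} [AddMonoid M] (f : M →+ (Fin n → ℚ))
    {V W : Set M} (hVW : V ⊆ W) (hWV : W ⊆ AddSubmonoid.closure V) :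
    coneGen (f '' W) = coneGen (f '' V) := by
  rw [coneGen_eq_span, coneGen_eq_span]
  refine congrArg _ (le_antisymm ?_ (Submodule.span_mono (Set.image_mono hVW)))
  calc Submodule.span ℚ≥0 (f '' W)
      ≤ Submodule.span ℚ≥0 (f '' AddSubmonoid.closure V) :=
        Submodule.span_mono (Set.image_mono hWV)
    _ = Submodule.span ℚ≥0 (AddSubmonoid.closure (f '' V) : Set (Fin n → ℚ)) := by
        rw [← AddMonoidHom.map_mclosure, AddSubmonoid.coe_map]
    _ = Submodule.span ℚ≥0 (f '' V) := Submodule.span_closure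

end Cones

lemma orbitCone_eq_coneGen_image_weights {K A : Type*} [Field K] [CommRing A] [Algebra K A]
    {n : ℕ} (𝒜 : (Fin n → ℤ) → Submodule K A) [GradedAlgebra 𝒜] (x : A →ₐ[K] K) :
    orbitCone 𝒜 x = coneGen ((Int.castAddHom ℚ).compLeft (Fin n) '' weights 𝒜 x) := by
  refine congrArg coneGen (Set.ext fun v => ⟨?_, ?_⟩)
  · rintro ⟨m, a, ha, hxa, rfl⟩
    exact ⟨m, ⟨a, ha, hxa⟩, rfl⟩
  · rintro ⟨m, ⟨a, ha, hxa⟩, rfl⟩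
    exact ⟨m, a, ha, hxa, rfl⟩

theorem orbitCones_polyhedral_and_finitely_many_general
    {K A : Type*} [Field K] [CommRing A] [Algebra K A]
    {n : ℕ} (𝒜 : (Fin n → ℤ) → Submodule K A) [GradedAlgebra 𝒜]
    [Algebra.FiniteType K A] :
    (∀ x : A →ₐ[K] K, ∃ s : Finset (Fin n → ℚ), orbitCone 𝒜 x = coneGen ↑s) ∧
      {C : Set (Fin n → ℚ) | ∃ x : A →ₐ[K] K, C = orbitCone 𝒜 x}.Finite := by
  classical
  obtain ⟨D, hD⟩ := exists_finset_weights_subset_closure (𝒜 := 𝒜) (B := K)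
  set cast := (Int.castAddHom ℚ).compLeft (Fin n)
  have hω (x : A →ₐ[K] K) :
      orbitCone 𝒜 x = coneGen ↑((D.filter (· ∈ weights 𝒜 x)).image cast) := by
    rw [orbitCone_eq_coneGen_image_weights, Finset.coe_image, Finset.coe_filter]
    exact coneGen_image_eq_of_subset_closure cast Set.inter_subset_right (hD x)
  refine ⟨fun x => ⟨_, hω x⟩, (D.powerset.finite_toSet.image fun E =>
    coneGen ↑(E.image cast)).subset ?_⟩
  rintro _ ⟨x, rfl⟩
  exact ⟨_, Finset.mem_powerset.2 (Finset.filter_subset _ _), (hω x).symm⟩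

/-- Let `A` be a commutative `K`-algebra graded by `ℤ^n` which is finitely generated
as a `K`-algebra. Then every orbit cone `ω(x)` is a finitely generated (polyhedral)
convex cone in `ℚ^n`, and the set of all orbit cones is finite. -/
theorem orbitCones_polyhedral_and_finitely_many
    {K A : Type*} [Field K] [CommRing A] [Algebra K A]
    {n : ℕ} (hn : 1 ≤ n) (𝒜 : (Fin n → ℤ) → Submodule K A) [GradedAlgebra 𝒜]
    [Algebra.FiniteType K A] :
    (∀ x : A →ₐ[K] K, ∃ s : Finset (Fin n → ℚ), orbitCone 𝒜 x = coneGen ↑s) ∧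
      {C : Set (Fin n → ℚ) | ∃ x : A →ₐ[K] K, C = orbitCone 𝒜 x}.Finite :=
  orbitCones_polyhedral_and_finitely_many_general 𝒜
end

section
/- Let K be an algebraically closed field and A an integral domain which is a finitely generated commutative K-algebra graded by ℤ^n. Then for χ ∈ ℤ^n, there exists a K-algebra homomorphism x : A → K with χ ∈ ω(x) (i.e., the set of χ-semistable points is nonempty) if and only if χ lies in the weight cone ω(A). -/
/-- The weight cone `ω(A)`: the convex cone generated over `ℚ_{≥0}` by all
`m ∈ ℤ^n` with `𝒜 m ≠ 0`. -/
def weightCone {K A : Type*} [Field K] [CommRing A] [Algebra K A]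
    {n : ℕ} (𝒜 : (Fin n → ℤ) → Submodule K A) : Set (Fin n → ℚ) :=
  coneGen {v | ∃ m : Fin n → ℤ, 𝒜 m ≠ ⊥ ∧ v = fun j => (m j : ℚ)}


/-!
Every orbit cone lies in the weight cone, since a weight `m` carrying an element not killed by `x`
has `𝒜 m ≠ 0`. Conversely, a point of the weight cone only involves finitely many weights `m`, each carrying a
nonzero homogeneous element `a_m`. Since `A` is a domain, the product of the `a_m` is nonzero,
and by the Nullstellensatz some `K`-point `x` does not vanish on it, hence on any `a_m`; all
these weights then lie in `ω(x)`.
-/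

section Nullstellensatz

variable {K A : Type*} [Field K] [IsAlgClosed K] [CommRing A] [Algebra K A]
  [Algebra.FiniteType K A]

theorem exists_algHom_apply_ne_zero [IsReduced A] {a : A} (ha : a ≠ 0) :
    ∃ x : A →ₐ[K] K, x a ≠ 0 := by
  have : IsJacobsonRing A := isJacobsonRing_of_finiteType (A := K)
  -- In a reduced Jacobson ring the maximal ideals intersect to `0`.
  have ha' : a ∉ (⊥ : Ideal A).jacobson := by
    rwa [← Ideal.radical_eq_jacobson, Ideal.radical_bot_of_isReduced, Ideal.mem_bot]
  obtain ⟨m, ⟨-, hm⟩, ham⟩ := by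
    simpa only [Ideal.jacobson, Ideal.mem_sInf, not_forall, exists_prop] using ha'
  let := Ideal.Quotient.field m
  have : Algebra.FiniteType K (A ⧸ m) :=
    .of_surjective (Ideal.Quotient.mkₐ K m) (Ideal.Quotient.mkₐ_surjective K m)
  have : Module.Finite K (A ⧸ m) := finite_of_finite_type_of_isJacobsonRing K (A ⧸ m)
  have : Algebra.IsAlgebraic K (A ⧸ m) := Algebra.IsAlgebraic.of_finite K _
  refine ⟨(IsAlgClosed.lift : A ⧸ m →ₐ[K] K).comp (Ideal.Quotient.mkₐ K m), ?_⟩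
  rw [AlgHom.comp_apply, Ideal.Quotient.mkₐ_eq_mk, map_ne_zero,
    Ne, Ideal.Quotient.eq_zero_iff_mem]
  exact ham

theorem exists_algHom_forall_apply_ne_zero [IsDomain A] {ι : Type*} [Fintype ι] (f : ι → A)
    (hf : ∀ i, f i ≠ 0) : ∃ x : A →ₐ[K] K, ∀ i, x (f i) ≠ 0 := by
  obtain ⟨x, hx⟩ := exists_algHom_apply_ne_zero (K := K)
    (Finset.prod_ne_zero_iff.mpr fun i _ => hf i : ∏ i, f i ≠ 0)
  rw [map_prod, Finset.prod_ne_zero_iff] at hx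
  exact ⟨x, fun i => hx i (Finset.mem_univ i)⟩

end Nullstellensatz

section Cones

variable {n : ℕ}

theorem coneGen_mono {S T : Set (Fin n → ℚ)} (h : S ⊆ T) : coneGen S ⊆ coneGen T :=
  fun _ ⟨s, c, hs, hv⟩ => ⟨s, c, fun w hw => ⟨(hs w hw).1, h (hs w hw).2⟩, hv⟩

theorem exists_finset_subset_of_mem_coneGen {S : Set (Fin n → ℚ)} {v : Fin n → ℚ}
    (hv : v ∈ coneGen S) : ∃ s : Finset (Fin n → ℚ), ↑s ⊆ S ∧ v ∈ coneGen (s : Set _) :=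
  let ⟨s, c, hs, hv⟩ := hv
  ⟨s, fun w hw => (hs w hw).2, s, c, fun w hw => ⟨(hs w hw).1, hw⟩, hv⟩

variable {K A : Type*} [Field K] [CommRing A] [Algebra K A]
  (𝒜 : (Fin n → ℤ) → Submodule K A)

theorem orbitCone_subset_weightCone (x : A →ₐ[K] K) : orbitCone 𝒜 x ⊆ weightCone 𝒜 := by
  refine coneGen_mono ?_
  rintro _ ⟨m, a, ha, hxa, rfl⟩
  refine ⟨m, fun hm => hxa ?_, rfl⟩
  rw [hm, Submodule.mem_bot] at ha
  rw [ha, map_zero]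

theorem exists_coneGen_subset_orbitCone [IsAlgClosed K] [IsDomain A]
    [Algebra.FiniteType K A] (s : Finset (Fin n → ℚ))
    (hs : ↑s ⊆ {v | ∃ m : Fin n → ℤ, 𝒜 m ≠ ⊥ ∧ v = fun j => (m j : ℚ)}) :
    ∃ x : A →ₐ[K] K, coneGen (s : Set _) ⊆ orbitCone 𝒜 x := by
  have hweight (w : s) :
      ∃ a : A, a ≠ 0 ∧ ∃ m, a ∈ 𝒜 m ∧ (w : Fin n → ℚ) = fun j => (m j : ℚ) := by
    obtain ⟨m, hm, hw⟩ := hs w.2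
    obtain ⟨a, ha, ha0⟩ := (Submodule.ne_bot_iff _).mp hm
    exact ⟨a, ha0, m, ha, hw⟩
  choose a ha0 m ha hw using hweight
  obtain ⟨x, hx⟩ := exists_algHom_forall_apply_ne_zero (K := K) a ha0
  refine ⟨x, coneGen_mono fun w hw' => ?_⟩
  exact ⟨m ⟨w, hw'⟩, a ⟨w, hw'⟩, ha _, hx _, hw ⟨w, hw'⟩⟩

end Cones

theorem exists_semistable_iff_mem_weightCone_general
    {K A : Type*} [Field K] [IsAlgClosed K] [CommRing A] [IsDomain A] [Algebra K A]
    {n : ℕ} (𝒜 : (Fin n → ℤ) → Submodule K A)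
    [Algebra.FiniteType K A] (χ : Fin n → ℤ) :
    (∃ x : A →ₐ[K] K, (fun j => (χ j : ℚ)) ∈ orbitCone 𝒜 x) ↔
      (fun j => (χ j : ℚ)) ∈ weightCone 𝒜 := by
  refine ⟨fun ⟨x, hx⟩ => orbitCone_subset_weightCone 𝒜 x hx, fun hχ => ?_⟩
  obtain ⟨s, hs, hχs⟩ := exists_finset_subset_of_mem_coneGen hχ
  obtain ⟨x, hx⟩ := exists_coneGen_subset_orbitCone 𝒜 s hs
  exact ⟨x, hx hχs⟩

/-- Let `K` be algebraically closed and `A` an integral domain which is a finitely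
generated commutative `K`-algebra graded by `ℤ^n`. Then for `χ ∈ ℤ^n`, there exists
a `K`-algebra homomorphism `x : A → K` with `χ ∈ ω(x)` if and only if `χ` lies in
the weight cone `ω(A)`. -/
theorem exists_semistable_iff_mem_weightCone
    {K A : Type*} [Field K] [IsAlgClosed K] [CommRing A] [IsDomain A] [Algebra K A]
    {n : ℕ} (hn : 1 ≤ n) (𝒜 : (Fin n → ℤ) → Submodule K A) [GradedAlgebra 𝒜]
    [Algebra.FiniteType K A] (χ : Fin n → ℤ) :
    (∃ x : A →ₐ[K] K, (fun j => (χ j : ℚ)) ∈ orbitCone 𝒜 x) ↔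
      (fun j => (χ j : ℚ)) ∈ weightCone 𝒜 :=
  exists_semistable_iff_mem_weightCone_general 𝒜 χ
end

section
/- Let A be a commutative K-algebra graded by ℤ^n and let χ, χ' ∈ ℤ^n. Then the inclusion of semistable sets {x : χ ∈ ω(x)} ⊆ {x : χ' ∈ ω(x)} (over all K-algebra homomorphisms x : A → K) holds if and only if λ(χ') ⊆ λ(χ) for the associated GIT-cones. -/
/-- The GIT-cone `λ(χ)`: the intersection of all orbit cones `ω(x)` over the
`K`-algebra homomorphisms `x : A → K` with `χ ∈ ω(x)` (all of `ℚ^n` if there is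
no such `x`). -/
def gitCone {K A : Type*} [Field K] [CommRing A] [Algebra K A]
    {n : ℕ} (𝒜 : (Fin n → ℤ) → Submodule K A) (χ : Fin n → ℤ) : Set (Fin n → ℚ) :=
  ⋂ (x : A →ₐ[K] K) (_ : (fun j => (χ j : ℚ)) ∈ orbitCone 𝒜 x), orbitCone 𝒜 x

section GitCone

variable {K A : Type*} [Field K] [CommRing A] [Algebra K A] {n : ℕ}
  (𝒜 : (Fin n → ℤ) → Submodule K A)

theorem gitCone_subset_orbitCone {χ : Fin n → ℤ} {x : A →ₐ[K] K}
    (hx : (fun j => (χ j : ℚ)) ∈ orbitCone 𝒜 x) : gitCone 𝒜 χ ⊆ orbitCone 𝒜 x :=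
  Set.biInter_subset_of_mem (t := fun x => orbitCone 𝒜 x) hx

theorem self_mem_gitCone (χ : Fin n → ℤ) : (fun j => (χ j : ℚ)) ∈ gitCone 𝒜 χ :=
  Set.mem_iInter₂.2 fun _ hx => hx

theorem gitCone_subset_gitCone_of_semistable_subset {χ χ' : Fin n → ℤ}
    (h : {x : A →ₐ[K] K | (fun j => (χ j : ℚ)) ∈ orbitCone 𝒜 x} ⊆
      {x : A →ₐ[K] K | (fun j => (χ' j : ℚ)) ∈ orbitCone 𝒜 x}) :
    gitCone 𝒜 χ' ⊆ gitCone 𝒜 χ :=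
  Set.subset_iInter₂ fun _ hx => gitCone_subset_orbitCone 𝒜 (h hx)

end GitCone

theorem semistable_subset_iff_gitCone_subset_general
    {K A : Type*} [Field K] [CommRing A] [Algebra K A]
    {n : ℕ} (𝒜 : (Fin n → ℤ) → Submodule K A)
    (χ χ' : Fin n → ℤ) :
    {x : A →ₐ[K] K | (fun j => (χ j : ℚ)) ∈ orbitCone 𝒜 x} ⊆
        {x : A →ₐ[K] K | (fun j => (χ' j : ℚ)) ∈ orbitCone 𝒜 x} ↔
      gitCone 𝒜 χ' ⊆ gitCone 𝒜 χ :=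
  ⟨gitCone_subset_gitCone_of_semistable_subset 𝒜, fun h _ hx =>
    gitCone_subset_orbitCone 𝒜 hx (h (self_mem_gitCone 𝒜 χ'))⟩

/-- Let `A` be a commutative `K`-algebra graded by `ℤ^n` and `χ, χ' ∈ ℤ^n`. Then
the inclusion of semistable sets `{x : χ ∈ ω(x)} ⊆ {x : χ' ∈ ω(x)}` holds if and
only if `λ(χ') ⊆ λ(χ)` for the associated GIT-cones. -/
theorem semistable_subset_iff_gitCone_subset
    {K A : Type*} [Field K] [CommRing A] [Algebra K A]
    {n : ℕ} (hn : 1 ≤ n) (𝒜 : (Fin n → ℤ) → Submodule K A) [GradedAlgebra 𝒜]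
    (χ χ' : Fin n → ℤ) :
    {x : A →ₐ[K] K | (fun j => (χ j : ℚ)) ∈ orbitCone 𝒜 x} ⊆
        {x : A →ₐ[K] K | (fun j => (χ' j : ℚ)) ∈ orbitCone 𝒜 x} ↔
      gitCone 𝒜 χ' ⊆ gitCone 𝒜 χ :=
  semistable_subset_iff_gitCone_subset_general 𝒜 χ χ'
end

section
/- Let J_1, J_2 ⊆ {1,…,m} be disjoint nonempty subsets with |J_1| + |J_2| ≤ m − 3. Then the ℚ-linear span of the set of vectors {u_{ij} : 1 ≤ i < j ≤ m, |{i,j} ∩ J_1| = |{i,j} ∩ J_2|} equals the hyperplane ℋ_{J_1,J_2} = {s ∈ ℚ^m : Σ_{i∈J_1} s_i = Σ_{j∈J_2} s_j}. -/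
/-- The vector `u_{ij} ∈ ℚ^m` with entries `1` at positions `i` and `j` and `0`
elsewhere. -/
def uvec {m : ℕ} (i j : Fin m) : Fin m → ℚ := fun l => if l = i ∨ l = j then 1 else 0

/-- Single basis vector. -/
def sing {m : ℕ} (k : Fin m) : Fin m → ℚ := fun l => if l = k then 1 else 0

lemma uvec_comm {m : ℕ} (i j : Fin m) : uvec i j = uvec j i := by
  funext x; simp [uvec, or_comm]

lemma sum_uvec {m : ℕ} (J : Finset (Fin m)) (i j : Fin m) :
    ∑ x ∈ J, uvec i j x = ((({i, j} : Finset (Fin m)) ∩ J).card : ℚ) := by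
  classical
  unfold uvec
  rw [Finset.sum_boole]
  congr 2
  ext x
  simp [Finset.mem_filter, Finset.mem_inter, and_comm, eq_comm]

/-- Let `J₁, J₂ ⊆ {1,…,m}` be disjoint nonempty subsets with `|J₁| + |J₂| ≤ m − 3`.
Then the `ℚ`-linear span of the vectors `u_{ij}` with `|{i,j} ∩ J₁| = |{i,j} ∩ J₂|`
equals the hyperplane `ℋ_{J₁,J₂} = {s : Σ_{i∈J₁} s_i = Σ_{j∈J₂} s_j}`. -/
theorem span_balanced_uvec_eq_hyperplane
    {m : ℕ} (J₁ J₂ : Finset (Fin m)) (hd : Disjoint J₁ J₂)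
    (h1 : J₁.Nonempty) (h2 : J₂.Nonempty) (hcard : J₁.card + J₂.card ≤ m - 3) :
    (Submodule.span ℚ {v : Fin m → ℚ | ∃ i j : Fin m, i < j ∧
        (({i, j} : Finset (Fin m)) ∩ J₁).card = (({i, j} : Finset (Fin m)) ∩ J₂).card ∧
        v = uvec i j} : Set (Fin m → ℚ)) =
      {s | ∑ i ∈ J₁, s i = ∑ j ∈ J₂, s j} := by
  classical
  set S : Set (Fin m → ℚ) := {v : Fin m → ℚ | ∃ i j : Fin m, i < j ∧
      (({i, j} : Finset (Fin m)) ∩ J₁).card = (({i, j} : Finset (Fin m)) ∩ J₂).card ∧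
      v = uvec i j} with hS
  set W := Submodule.span ℚ S with hW
  -- generator membership for any distinct balanced pair
  have hgen : ∀ i j : Fin m, i ≠ j →
      (({i, j} : Finset (Fin m)) ∩ J₁).card = (({i, j} : Finset (Fin m)) ∩ J₂).card →
      uvec i j ∈ W := by
    intro i j hij hbal
    rcases lt_or_gt_of_ne hij with h | h
    · exact Submodule.subset_span ⟨i, j, h, hbal, rfl⟩
    · rw [uvec_comm]
      refine Submodule.subset_span ⟨j, i, h, ?_, rfl⟩
      rwa [Finset.pair_comm j i]
  -- cardinality of the complement
  have hm5 : 5 ≤ m := by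
    have := h1.card_pos
    have := h2.card_pos
    omega
  have hCcard : 3 ≤ ((J₁ ∪ J₂)ᶜ : Finset (Fin m)).card := by
    have hu : (J₁ ∪ J₂).card = J₁.card + J₂.card := Finset.card_union_of_disjoint hd
    have hc : ((J₁ ∪ J₂)ᶜ : Finset (Fin m)).card = m - (J₁ ∪ J₂).card := by
      rw [Finset.card_compl, Fintype.card_fin]
    omega
  -- empty intersection lemma
  have hinter_empty : ∀ (J : Finset (Fin m)), ∀ i j : Fin m, i ∉ J → j ∉ J →
      (({i, j} : Finset (Fin m)) ∩ J) = ∅ := by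
    intro J i j hi hj
    ext x
    simp only [Finset.mem_inter, Finset.mem_insert, Finset.mem_singleton,
      Finset.notMem_empty, iff_false]
    rintro ⟨h | h, hx⟩ <;> subst h <;> contradiction
  -- singles of complement elements are in the span
  have hsing : ∀ k : Fin m, k ∉ J₁ ∪ J₂ → sing k ∈ W := by
    intro k hk
    have hkC : k ∈ (J₁ ∪ J₂)ᶜ := Finset.mem_compl.mpr hk
    have h2' : 2 ≤ (((J₁ ∪ J₂)ᶜ).erase k).card := by
      rw [Finset.card_erase_of_mem hkC]; omega
    obtain ⟨l, hl⟩ : (((J₁ ∪ J₂)ᶜ).erase k).Nonempty :=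
      Finset.card_pos.mp (by omega)
    have h1' : 1 ≤ ((((J₁ ∪ J₂)ᶜ).erase k).erase l).card := by
      rw [Finset.card_erase_of_mem hl]; omega
    obtain ⟨n, hn⟩ : ((((J₁ ∪ J₂)ᶜ).erase k).erase l).Nonempty :=
      Finset.card_pos.mp (by omega)
    have hlk : l ≠ k := (Finset.mem_erase.mp hl).1
    have hlC : l ∉ J₁ ∪ J₂ := Finset.mem_compl.mp (Finset.mem_erase.mp hl).2
    have hnl : n ≠ l := (Finset.mem_erase.mp hn).1
    have hnk : n ≠ k := (Finset.mem_erase.mp (Finset.mem_erase.mp hn).2).1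
    have hnC : n ∉ J₁ ∪ J₂ :=
      Finset.mem_compl.mp (Finset.mem_erase.mp (Finset.mem_erase.mp hn).2).2
    have hkJ1 : k ∉ J₁ := fun h => hk (Finset.mem_union_left _ h)
    have hkJ2 : k ∉ J₂ := fun h => hk (Finset.mem_union_right _ h)
    have hlJ1 : l ∉ J₁ := fun h => hlC (Finset.mem_union_left _ h)
    have hlJ2 : l ∉ J₂ := fun h => hlC (Finset.mem_union_right _ h)
    have hnJ1 : n ∉ J₁ := fun h => hnC (Finset.mem_union_left _ h)
    have hnJ2 : n ∉ J₂ := fun h => hnC (Finset.mem_union_right _ h)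
    have key : sing k = (2 : ℚ)⁻¹ • (uvec k l + uvec k n - uvec l n) := by
      have hkl : k ≠ l := fun h => hlk h.symm
      have hkn : k ≠ n := fun h => hnk h.symm
      have hln : l ≠ n := fun h => hnl h.symm
      funext x
      simp only [Pi.smul_apply, Pi.sub_apply, Pi.add_apply, smul_eq_mul, uvec, sing]
      by_cases hxk : x = k
      · subst hxk; simp [hkl, hkn]; try norm_num
      · by_cases hxl : x = l
        · subst hxl; simp [hlk, Ne.symm hnl, hln]; try norm_num
        · by_cases hxn : x = n
          · subst hxn; simp [hnk, hnl]; try norm_num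
          · simp [hxk, hxl, hxn]
    rw [key]
    refine Submodule.smul_mem _ _ (Submodule.sub_mem _ (Submodule.add_mem _ ?_ ?_) ?_)
    · exact hgen k l (fun h => hlk h.symm)
        (by rw [hinter_empty J₁ k l hkJ1 hlJ1, hinter_empty J₂ k l hkJ2 hlJ2])
    · exact hgen k n (fun h => hnk h.symm)
        (by rw [hinter_empty J₁ k n hkJ1 hnJ1, hinter_empty J₂ k n hkJ2 hnJ2])
    · exact hgen l n (fun h => hnl h.symm)
        (by rw [hinter_empty J₁ l n hlJ1 hnJ1, hinter_empty J₂ l n hlJ2 hnJ2])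
  -- cross vectors are in the span
  have hcross : ∀ a ∈ J₁, ∀ b ∈ J₂, uvec a b ∈ W := by
    intro a ha b hb
    have hab : a ≠ b := fun h => (Finset.disjoint_left.mp hd ha) (h ▸ hb)
    refine hgen a b hab ?_
    have e1 : (({a, b} : Finset (Fin m)) ∩ J₁) = {a} := by
      ext x
      simp only [Finset.mem_inter, Finset.mem_insert, Finset.mem_singleton]
      constructor
      · rintro ⟨h | h, hx⟩
        · exact h
        · exact absurd hx (h ▸ Finset.disjoint_right.mp hd hb)
      · rintro rfl; exact ⟨Or.inl rfl, ha⟩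
    have e2 : (({a, b} : Finset (Fin m)) ∩ J₂) = {b} := by
      ext x
      simp only [Finset.mem_inter, Finset.mem_insert, Finset.mem_singleton]
      constructor
      · rintro ⟨h | h, hx⟩
        · exact absurd hx (h ▸ Finset.disjoint_left.mp hd ha)
        · exact h
      · rintro rfl; exact ⟨Or.inr rfl, hb⟩
    rw [e1, e2]
    simp
  -- main proof
  ext s
  simp only [SetLike.mem_coe, Set.mem_setOf_eq]
  constructor
  · intro hs
    induction hs using Submodule.span_induction with
    | mem v hv =>
      obtain ⟨i, j, _, hbal, rfl⟩ := hv
      rw [sum_uvec, sum_uvec, hbal]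
    | zero => simp
    | add x y hx hy ihx ihy => simp only [Pi.add_apply, Finset.sum_add_distrib, ihx, ihy]
    | smul a x hx ihx => simp only [Pi.smul_apply, smul_eq_mul, ← Finset.mul_sum, ihx]
  · intro hsum
    obtain ⟨a₀, ha₀⟩ := h1
    obtain ⟨b₀, hb₀⟩ := h2
    have ha₀b₀ : a₀ ≠ b₀ := fun h => (Finset.disjoint_left.mp hd ha₀) (h ▸ hb₀)
    set C := ((J₁ ∪ J₂)ᶜ : Finset (Fin m)) with hC
    set t : ℚ := ∑ i ∈ J₁, s i with ht
    have key : s = (∑ k ∈ C, s k • sing k) + (∑ a ∈ J₁, s a • uvec a b₀)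
        + (∑ b ∈ J₂, s b • uvec a₀ b) - t • uvec a₀ b₀ := by
      funext x
      simp only [Pi.sub_apply, Pi.add_apply, Finset.sum_apply, Pi.smul_apply, smul_eq_mul]
      have hCsum : ∑ k ∈ C, s k * sing k x = if x ∈ C then s x else 0 := by
        rw [← Finset.sum_ite_eq C x s]
        refine Finset.sum_congr rfl fun k _ => ?_
        simp only [sing]
        by_cases h : x = k
        · subst h; simp
        · simp [h]
      have eJ1 : (∑ a ∈ J₁, s a * uvec a b₀ x)
          = if x = b₀ then t else (if x ∈ J₁ then s x else 0) := by
        by_cases h : x = b₀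
        · subst h
          rw [if_pos rfl, ht]
          refine Finset.sum_congr rfl fun a _ => ?_
          simp [uvec]
        · rw [if_neg h, ← Finset.sum_ite_eq J₁ x s]
          refine Finset.sum_congr rfl fun a _ => ?_
          simp only [uvec]
          by_cases h2 : x = a
          · subst h2; simp
          · simp [h2, h]
      have eJ2 : (∑ b ∈ J₂, s b * uvec a₀ b x)
          = if x = a₀ then t else (if x ∈ J₂ then s x else 0) := by
        by_cases h : x = a₀
        · subst h
          rw [if_pos rfl, hsum]
          refine Finset.sum_congr rfl fun b _ => ?_
          simp [uvec]
        · rw [if_neg h, ← Finset.sum_ite_eq J₂ x s]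
          refine Finset.sum_congr rfl fun b _ => ?_
          simp only [uvec]
          by_cases h2 : x = b
          · subst h2; simp
          · simp [h2, h]
      have hCmem : x ∈ C ↔ (x ∉ J₁ ∧ x ∉ J₂) := by
        simp [hC, Finset.mem_compl, Finset.mem_union, not_or]
      have hdisj : ∀ y : Fin m, y ∈ J₁ → y ∈ J₂ → False :=
        fun y hy1 hy2 => Finset.disjoint_left.mp hd hy1 hy2
      rw [hCsum, eJ1, eJ2]
      simp only [uvec]
      by_cases hxa : x = a₀
      · have hx1 : x ∈ J₁ := hxa ▸ ha₀
        have hxb : ¬x = b₀ := fun h => ha₀b₀ (hxa ▸ h)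
        have hxC : x ∉ C := fun h => (hCmem.mp h).1 hx1
        rw [if_neg hxC, if_neg hxb, if_pos hx1, if_pos hxa, if_pos (Or.inl hxa)]
        ring
      · by_cases hxb : x = b₀
        · have hx2 : x ∈ J₂ := hxb ▸ hb₀
          have hxC : x ∉ C := fun h => (hCmem.mp h).2 hx2
          rw [if_neg hxC, if_pos hxb, if_neg hxa, if_pos hx2, if_pos (Or.inr hxb)]
          ring
        · rw [if_neg hxb, if_neg hxa, if_neg (not_or.mpr ⟨hxa, hxb⟩)]
          by_cases hx1 : x ∈ J₁
          · have hx2 : x ∉ J₂ := fun h => hdisj x hx1 h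
            have hxC : x ∉ C := fun h => (hCmem.mp h).1 hx1
            rw [if_neg hxC, if_pos hx1, if_neg hx2]
            ring
          · by_cases hx2 : x ∈ J₂
            · have hxC : x ∉ C := fun h => (hCmem.mp h).2 hx2
              rw [if_neg hxC, if_neg hx1, if_pos hx2]
              ring
            · have hxC : x ∈ C := hCmem.mpr ⟨hx1, hx2⟩
              rw [if_pos hxC, if_neg hx1, if_neg hx2]
              ring
    rw [key]
    refine Submodule.sub_mem _ (Submodule.add_mem _ (Submodule.add_mem _ ?_ ?_) ?_) ?_
    · exact Submodule.sum_mem _ fun k hk =>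
        Submodule.smul_mem _ _ (hsing k (Finset.mem_compl.mp hk))
    · exact Submodule.sum_mem _ fun a ha =>
        Submodule.smul_mem _ _ (hcross a ha b₀ hb₀)
    · exact Submodule.sum_mem _ fun b hb =>
        Submodule.smul_mem _ _ (hcross a₀ ha₀ b hb)
    · exact Submodule.smul_mem _ _ (hcross a₀ ha₀ b₀ hb₀)
end
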